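/- Let C ⊆ ℝⁿ and C' ⊆ ℝᵐ be cones, i.e. sets closed under multiplication by nonnegative real scalars (in particular 0 ∈ C and 0 ∈ C'). Suppose the links S = C ∩ {x : ‖x‖ = 1} and S' = C' ∩ {x : ‖x‖ = 1} are bi-Lipschitz homeomorphic (with respect to the outer metrics). Then there exists a bi-Lipschitz homeomorphism H : C → C' with H(0) = 0; in particular the germs (C, 0) and (C', 0) are bi-Lipschitz equivalent. -/

import Mathlib

/-!
Extend the link map radially, `H (r • u) = r • h u`. For unit vectors `u, v` and `0 ≤ r ≤ s`,
the distance `‖r • u - s • v‖` is comparable, up to a factor `2`, to `(s - r) + r * ‖u - v‖`;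
`H` keeps the first term and changes the second by a factor at most `K`, so it is
`(2K + 1)`-bi-Lipschitz.
-/

open Metric Set Function

variable {E F : Type*} [NormedAddCommGroup E] [NormedSpace ℝ E]
  [NormedAddCommGroup F] [NormedSpace ℝ F]

section UnitVectors

variable {p q : E} {r s : ℝ}

theorem sub_le_norm_smul_sub_smul (hp : ‖p‖ = 1) (hq : ‖q‖ = 1) (hr : 0 ≤ r) (hs : 0 ≤ s) :
    s - r ≤ ‖r • p - s • q‖ := by
  simpa only [norm_smul_of_nonneg hr, norm_smul_of_nonneg hs, hp, hq, mul_one,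
    norm_sub_rev (s • q)] using norm_sub_norm_le (s • q) (r • p)

theorem norm_smul_sub_smul_le (hq : ‖q‖ = 1) (hr : 0 ≤ r) (hrs : r ≤ s) :
    ‖r • p - s • q‖ ≤ r * ‖p - q‖ + (s - r) := by
  calc ‖r • p - s • q‖ = ‖r • (p - q) - (s - r) • q‖ := by congr 1; module
    _ ≤ ‖r • (p - q)‖ + ‖(s - r) • q‖ := norm_sub_le _ _
    _ = r * ‖p - q‖ + (s - r) := by
      rw [norm_smul_of_nonneg hr, norm_smul_of_nonneg (sub_nonneg.2 hrs), hq, mul_one]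

theorem mul_norm_sub_le_two_mul_norm_smul_sub_smul (hp : ‖p‖ = 1) (hq : ‖q‖ = 1) (hr : 0 ≤ r)
    (hrs : r ≤ s) : r * ‖p - q‖ ≤ 2 * ‖r • p - s • q‖ := by
  have hsr := sub_le_norm_smul_sub_smul hp hq hr (hr.trans hrs)
  calc r * ‖p - q‖ = ‖(r • p - s • q) + (s - r) • q‖ := by
        rw [← norm_smul_of_nonneg hr]; congr 1; module
    _ ≤ ‖r • p - s • q‖ + (s - r) := by
      refine (norm_add_le _ _).trans_eq ?_
      rw [norm_smul_of_nonneg (sub_nonneg.2 hrs), hq, mul_one]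
    _ ≤ 2 * ‖r • p - s • q‖ := by linarith

theorem norm_smul_sub_smul_le_of_norm_sub_le {p' q' : F} (hp : ‖p‖ = 1) (hq : ‖q‖ = 1)
    (hp' : ‖p'‖ = 1) (hq' : ‖q'‖ = 1) {K : ℝ} (hK : 0 ≤ K) (hpq : ‖p' - q'‖ ≤ K * ‖p - q‖)
    (hr : 0 ≤ r) (hs : 0 ≤ s) :
    ‖r • p' - s • q'‖ ≤ (2 * K + 1) * ‖r • p - s • q‖ := by
  wlog hrs : r ≤ s generalizing p q p' q' r s
  · rw [norm_sub_rev, norm_sub_rev (r • p)]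
    exact this hq hp hq' hp' (by rwa [norm_sub_rev, norm_sub_rev q]) hs hr (le_of_not_ge hrs)
  have hsr := sub_le_norm_smul_sub_smul hp hq hr hs
  calc ‖r • p' - s • q'‖ ≤ r * ‖p' - q'‖ + (s - r) := norm_smul_sub_smul_le hq' hr hrs
    _ ≤ K * (r * ‖p - q‖) + (s - r) := by nlinarith
    _ ≤ K * (2 * ‖r • p - s • q‖) + ‖r • p - s • q‖ := by
      have := mul_norm_sub_le_two_mul_norm_smul_sub_smul hp hq hr hrs
      gcongr
    _ = (2 * K + 1) * ‖r • p - s • q‖ := by ring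

end UnitVectors

noncomputable def radialExtension (g : E → F) (x : E) : F := ‖x‖ • g (‖x‖⁻¹ • x)

@[simp]
theorem radialExtension_zero (g : E → F) : radialExtension g 0 = 0 := by
  simp [radialExtension]

theorem radialExtension_smul (g : E → F) {p : E} (hp : ‖p‖ = 1) {r : ℝ} (hr : 0 ≤ r) :
    radialExtension g (r • p) = r • g p := by
  rcases hr.eq_or_lt with rfl | hr
  · simp
  rw [radialExtension, norm_smul_of_nonneg hr.le, hp, mul_one, inv_smul_smul₀ hr.ne']

section Cone

variable {g : E → F} {C : Set E} {C' : Set F} {x : E}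

theorem inv_norm_smul_mem_link (hC : ∀ t : ℝ, 0 ≤ t → ∀ x ∈ C, t • x ∈ C) (hx : x ∈ C)
    (hx0 : x ≠ 0) : ‖x‖⁻¹ • x ∈ C ∩ sphere 0 1 := by
  refine ⟨hC _ (inv_nonneg.2 (norm_nonneg x)) x hx, ?_⟩
  rw [mem_sphere_zero_iff_norm, norm_smul, norm_inv, norm_norm,
    inv_mul_cancel₀ (norm_ne_zero_iff.2 hx0)]

theorem norm_radialExtension (hC : ∀ t : ℝ, 0 ≤ t → ∀ x ∈ C, t • x ∈ C)
    (hg : MapsTo g (C ∩ sphere 0 1) (sphere 0 1)) (hx : x ∈ C) :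
    ‖radialExtension g x‖ = ‖x‖ := by
  rcases eq_or_ne x 0 with rfl | hx0
  · simp
  rw [radialExtension, norm_smul, norm_norm,
    mem_sphere_zero_iff_norm.1 (hg (inv_norm_smul_mem_link hC hx hx0)), mul_one]

theorem mapsTo_radialExtension (hC : ∀ t : ℝ, 0 ≤ t → ∀ x ∈ C, t • x ∈ C) (hC'0 : (0 : F) ∈ C')
    (hC' : ∀ t : ℝ, 0 ≤ t → ∀ y ∈ C', t • y ∈ C') (hg : MapsTo g (C ∩ sphere 0 1) C') :
    MapsTo (radialExtension g) C C' := by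
  intro x hx
  rcases eq_or_ne x 0 with rfl | hx0
  · simpa using hC'0
  exact hC' _ (norm_nonneg x) _ (hg (inv_norm_smul_mem_link hC hx hx0))

theorem surjOn_radialExtension (hC : ∀ t : ℝ, 0 ≤ t → ∀ x ∈ C, t • x ∈ C) (hC0 : (0 : E) ∈ C)
    (hC' : ∀ t : ℝ, 0 ≤ t → ∀ y ∈ C', t • y ∈ C')
    (hg : SurjOn g (C ∩ sphere 0 1) (C' ∩ sphere 0 1)) :
    SurjOn (radialExtension g) C C' := by
  intro y hy
  rcases eq_or_ne y 0 with rfl | hy0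
  · exact ⟨0, hC0, radialExtension_zero g⟩
  obtain ⟨p, ⟨hpC, hp⟩, hgp⟩ := hg (inv_norm_smul_mem_link hC' hy hy0)
  have hp1 : ‖p‖ = 1 := mem_sphere_zero_iff_norm.1 hp
  refine ⟨‖y‖ • p, hC _ (norm_nonneg y) p hpC, ?_⟩
  rw [radialExtension_smul g hp1 (norm_nonneg y), hgp, smul_inv_smul₀ (norm_ne_zero_iff.2 hy0)]

theorem dist_radialExtension_le_and_dist_le (hC : ∀ t : ℝ, 0 ≤ t → ∀ x ∈ C, t • x ∈ C)
    (hg : MapsTo g (C ∩ sphere 0 1) (sphere 0 1)) {K : ℝ} (hK : 0 ≤ K)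
    (hlip : ∀ p ∈ C ∩ sphere 0 1, ∀ q ∈ C ∩ sphere 0 1, dist (g p) (g q) ≤ K * dist p q)
    (hanti : ∀ p ∈ C ∩ sphere 0 1, ∀ q ∈ C ∩ sphere 0 1, dist p q ≤ K * dist (g p) (g q))
    {y : E} (hx : x ∈ C) (hy : y ∈ C) :
    dist (radialExtension g x) (radialExtension g y) ≤ (2 * K + 1) * dist x y ∧
      dist x y ≤ (2 * K + 1) * dist (radialExtension g x) (radialExtension g y) := by
  by_cases hxy : x = 0 ∨ y = 0
  · have heq : dist (radialExtension g x) (radialExtension g y) = dist x y := by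
      rcases hxy with rfl | rfl
      · rw [radialExtension_zero, dist_zero_left, dist_zero_left, norm_radialExtension hC hg hy]
      · rw [radialExtension_zero, dist_zero_right, dist_zero_right, norm_radialExtension hC hg hx]
    rw [heq]
    exact ⟨le_mul_of_one_le_left dist_nonneg (by linarith),
      le_mul_of_one_le_left dist_nonneg (by linarith)⟩
  obtain ⟨hx0, hy0⟩ := not_or.1 hxy
  have hp := inv_norm_smul_mem_link hC hx hx0
  have hq := inv_norm_smul_mem_link hC hy hy0
  have hunit {v : E} (hv : v ∈ C ∩ sphere 0 1) : ‖v‖ = 1 := mem_sphere_zero_iff_norm.1 hv.2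
  have hunit' {v : E} (hv : v ∈ C ∩ sphere 0 1) : ‖g v‖ = 1 := mem_sphere_zero_iff_norm.1 (hg hv)
  have hdist : dist x y = ‖‖x‖ • (‖x‖⁻¹ • x) - ‖y‖ • (‖y‖⁻¹ • y)‖ := by
    rw [smul_inv_smul₀ (norm_ne_zero_iff.2 hx0), smul_inv_smul₀ (norm_ne_zero_iff.2 hy0),
      dist_eq_norm]
  rw [dist_eq_norm, radialExtension, radialExtension, hdist]
  exact ⟨norm_smul_sub_smul_le_of_norm_sub_le (hunit hp) (hunit hq) (hunit' hp) (hunit' hq) hK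
      (by simpa only [dist_eq_norm] using hlip _ hp _ hq) (norm_nonneg x) (norm_nonneg y),
    norm_smul_sub_smul_le_of_norm_sub_le (hunit' hp) (hunit' hq) (hunit hp) (hunit hq) hK
      (by simpa only [dist_eq_norm] using hanti _ hp _ hq) (norm_nonneg x) (norm_nonneg y)⟩

end Cone

theorem Function.Bijective.exists_bijOn {α β : Type*} [Nonempty β] {s : Set α} {t : Set β}
    {f : s → t} (hf : Bijective f) : ∃ g : α → β, BijOn g s t ∧ ∀ p : s, g p = f p := by
  let g := extend Subtype.val (fun p ↦ (f p : β)) fun _ ↦ Classical.arbitrary β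
  have hg (p : s) : g p = f p := Subtype.val_injective.extend_apply _ _ p
  refine ⟨g, ⟨fun p hp ↦ ?_, fun p hp q hq hpq ↦ ?_, fun y hy ↦ ?_⟩, hg⟩
  · exact hg ⟨p, hp⟩ ▸ (f ⟨p, hp⟩).2
  · have := hf.1 (Subtype.ext ((hg ⟨p, hp⟩).symm.trans (hpq.trans (hg ⟨q, hq⟩))))
    exact congrArg Subtype.val this
  · obtain ⟨p, hp⟩ := hf.2 ⟨y, hy⟩
    exact ⟨p, p.2, (hg p).trans (congrArg Subtype.val hp)⟩

/-- If `C ⊆ ℝⁿ` and `C' ⊆ ℝᵐ` are cones (closed under multiplication by nonnegative reals,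
and containing `0`) whose links `C ∩ S^{n-1}` and `C' ∩ S^{m-1}` are bi-Lipschitz
homeomorphic with respect to the outer metrics, then there is a bi-Lipschitz homeomorphism
`H : C → C'` with `H 0 = 0`; in particular the germs `(C, 0)` and `(C', 0)` are
bi-Lipschitz equivalent. -/
theorem cones_biLipschitz_of_links_biLipschitz
    {n m : ℕ} (C : Set (EuclideanSpace ℝ (Fin n))) (C' : Set (EuclideanSpace ℝ (Fin m)))
    (hC0 : (0 : EuclideanSpace ℝ (Fin n)) ∈ C) (hC'0 : (0 : EuclideanSpace ℝ (Fin m)) ∈ C')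
    (hC : ∀ (t : ℝ), 0 ≤ t → ∀ x ∈ C, t • x ∈ C)
    (hC' : ∀ (t : ℝ), 0 ≤ t → ∀ y ∈ C', t • y ∈ C')
    (h : (C ∩ Metric.sphere (0 : EuclideanSpace ℝ (Fin n)) 1 : Set (EuclideanSpace ℝ (Fin n))) →
         (C' ∩ Metric.sphere (0 : EuclideanSpace ℝ (Fin m)) 1 : Set (EuclideanSpace ℝ (Fin m))))
    (hbij : Function.Bijective h)
    (K : ℝ) (hK : 1 ≤ K)
    (hlip : ∀ x y : (C ∩ Metric.sphere (0 : EuclideanSpace ℝ (Fin n)) 1 : Set (EuclideanSpace ℝ (Fin n))), (1 / K) * dist (x : EuclideanSpace ℝ (Fin n)) (y : EuclideanSpace ℝ (Fin n)) ≤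
        dist (h x : EuclideanSpace ℝ (Fin m)) (h y : EuclideanSpace ℝ (Fin m)) ∧
      dist (h x : EuclideanSpace ℝ (Fin m)) (h y : EuclideanSpace ℝ (Fin m)) ≤
        K * dist (x : EuclideanSpace ℝ (Fin n)) (y : EuclideanSpace ℝ (Fin n))) :
    ∃ H : C → C', Function.Bijective H ∧
      (H ⟨0, hC0⟩ : EuclideanSpace ℝ (Fin m)) = 0 ∧
      ∃ L : ℝ, 1 ≤ L ∧ ∀ v w : C,
        (1 / L) * dist (v : EuclideanSpace ℝ (Fin n)) (w : EuclideanSpace ℝ (Fin n)) ≤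
          dist (H v : EuclideanSpace ℝ (Fin m)) (H w : EuclideanSpace ℝ (Fin m)) ∧
        dist (H v : EuclideanSpace ℝ (Fin m)) (H w : EuclideanSpace ℝ (Fin m)) ≤
          L * dist (v : EuclideanSpace ℝ (Fin n)) (w : EuclideanSpace ℝ (Fin n)) := by
  obtain ⟨g, hgS, hgh⟩ := hbij.exists_bijOn
  have hK0 : 0 < K := by linarith
  have hdist {x y} (hx : x ∈ C) (hy : y ∈ C) :=
    dist_radialExtension_le_and_dist_le hC (hgS.mapsTo.mono_right inter_subset_right) hK0.le
      (fun p hp q hq ↦ by simpa only [hgh ⟨p, hp⟩, hgh ⟨q, hq⟩] using (hlip ⟨p, hp⟩ ⟨q, hq⟩).2)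
      (fun p hp q hq ↦ by
        rw [← div_le_iff₀' hK0, ← one_div_mul_eq_div, hgh ⟨p, hp⟩, hgh ⟨q, hq⟩]
        exact (hlip ⟨p, hp⟩ ⟨q, hq⟩).1) hx hy
  have hR : BijOn (radialExtension g) C C' :=
    ⟨mapsTo_radialExtension hC hC'0 hC' (hgS.mapsTo.mono_right inter_subset_left),
      fun x hx y hy hxy ↦ dist_le_zero.1 (by simpa [hxy] using (hdist hx hy).2),
      surjOn_radialExtension hC hC0 hC' hgS.surjOn⟩
  refine ⟨hR.mapsTo.restrict _ _ _, hR.bijective, radialExtension_zero g, 2 * K + 1, by linarith,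
    fun v w ↦ ⟨?_, (hdist v.2 w.2).1⟩⟩
  rw [one_div_mul_eq_div, div_le_iff₀' (by linarith)]
  exact (hdist v.2 w.2).2
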